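/- arXiv:2604.08859 — 2 statements merged into one kernel-verified Lean document; each statement's English description precedes it below -/
import Mathlib

section
/- Consider the scalar ODE ż = (a − z)·z·ln z with constant a > 1, z(0) ≥ a. Then z(t) ≥ a for all t ≥ 0 and 0 ≤ z(t) − a ≤ (z(0) − a)e^{−(a ln a)t} for all t ≥ 0; in particular z(t) → a at rate at least a·ln a. -/
open Real Set

/-!
Put `w = z - a`. Then `ẇ = -(z ln z) w` is a linear equation whose coefficient is continuous (as
`x ln x` is, even at `0`). By Grönwall a solution of it that vanishes once vanishes from then on, so
by the intermediate value theorem `w` never becomes negative: `z ≥ a`.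
Once `z ≥ a > 1`, monotonicity of `x ln x` gives `ẇ ≤ -(a ln a) w`, and a second application of
Grönwall yields the exponential decay.
-/

theorem nonneg_of_hasDerivAt_eq_mul_self {w g : ℝ → ℝ} {t₀ : ℝ} (hg : ContinuousOn g (Ici t₀))
    (hw : ∀ t ≥ t₀, HasDerivAt w (g t * w t) t) (h₀ : 0 ≤ w t₀) : ∀ t ≥ t₀, 0 ≤ w t := by
  intro T hT
  by_contra! hneg
  have hwc : ContinuousOn w (Icc t₀ T) := fun t ht => (hw t ht.1).continuousAt.continuousWithinAt
  obtain ⟨s, hs, hws⟩ := intermediate_value_Icc' hT hwc ⟨hneg.le, h₀⟩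
  have hsub : Icc s T ⊆ Icc t₀ T := Icc_subset_Icc_left hs.1
  obtain ⟨K, hK⟩ := isCompact_Icc.exists_bound_of_continuousOn
    (hg.mono (hsub.trans Icc_subset_Ici_self))
  have hwT : w T = 0 :=
    eq_zero_of_abs_deriv_le_mul_abs_self_of_eq_zero_right (hwc.mono hsub)
      (fun t ht => (hw t (hs.1.trans ht.1)).hasDerivWithinAt) hws
      (fun t ht => by
        rw [norm_mul]
        exact mul_le_mul_of_nonneg_right (hK t (Ico_subset_Icc_self ht)) (norm_nonneg _))
      T ⟨hs.2, le_rfl⟩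
  exact hneg.ne hwT

theorem le_mul_exp_of_hasDerivAt_le_mul_self {w w' : ℝ → ℝ} {K t₀ : ℝ}
    (hw : ∀ t ≥ t₀, HasDerivAt w (w' t) t) (hle : ∀ t ≥ t₀, w' t ≤ K * w t) :
    ∀ t ≥ t₀, w t ≤ w t₀ * exp (K * (t - t₀)) := by
  intro T hT
  have h := le_gronwallBound_of_liminf_deriv_right_le (f := w) (f' := w') (δ := w t₀) (K := K)
    (ε := 0) (b := T) (fun t ht => (hw t ht.1).continuousAt.continuousWithinAt)
    (fun t ht _ hr => (hw t ht.1).hasDerivWithinAt.liminf_right_slope_le hr) le_rfl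
    (fun t ht => by simpa using hle t ht.1) T ⟨hT, le_rfl⟩
  rwa [gronwallBound_ε0] at h

theorem stmt_8 (a : ℝ) (ha : 1 < a) (z : ℝ → ℝ)
    (hz : ∀ t ≥ (0:ℝ), HasDerivAt z ((a - z t) * z t * Real.log (z t)) t)
    (hz0 : a ≤ z 0) :
    (∀ t ≥ (0:ℝ), a ≤ z t) ∧
    (∀ t ≥ (0:ℝ), 0 ≤ z t - a ∧
      z t - a ≤ (z 0 - a) * Real.exp (-(a * Real.log a) * t)) := by
  have hw : ∀ t ≥ (0:ℝ), HasDerivAt (fun s => z s - a) (-(z t * log (z t)) * (z t - a)) t :=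
    fun t ht => ((hz t ht).sub_const a).congr_deriv (by ring)
  have hcoeff : ContinuousOn (fun t => -(z t * log (z t))) (Ici 0) :=
    (continuous_mul_log.comp_continuousOn fun t ht =>
      (hz t ht).continuousAt.continuousWithinAt).neg
  have hge : ∀ t ≥ (0:ℝ), a ≤ z t := fun t ht =>
    sub_nonneg.1 (nonneg_of_hasDerivAt_eq_mul_self hcoeff hw (sub_nonneg.2 hz0) t ht)
  refine ⟨hge, fun t ht => ⟨sub_nonneg.2 (hge t ht), ?_⟩⟩
  have ha_mem : a ∈ Ici (exp (-1)) := (exp_le_one_iff.2 (by norm_num)).trans ha.le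
  have hdecay : ∀ s ≥ (0:ℝ), -(z s * log (z s)) * (z s - a) ≤ -(a * log a) * (z s - a) :=
    fun s hs => mul_le_mul_of_nonneg_right
      (neg_le_neg (mul_log_strictMonoOn.monotoneOn ha_mem
        (mem_Ici.2 (ha_mem.trans (hge s hs))) (hge s hs)))
      (sub_nonneg.2 (hge s hs))
  simpa using le_mul_exp_of_hasDerivAt_le_mul_self hw hdecay t ht
end

section
/- Consider the mass-action logarithm system ż = (a − z)xz, ẋ = (a − z)x with constant a > 1, z(0) ≥ a, x(0) = ln z(0). Then (z(t), x(t)) → (a, ln a) as t → ∞, and there is C > 0 with |x(t) − ln a| ≤ C e^{−(a ln a)t} for all t ≥ 0. -/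
open Real Filter

private lemma monoOnD {f f' : ℝ → ℝ} {D : Set ℝ} (hD : Convex ℝ D)
    (hf : ∀ t ∈ D, HasDerivAt f (f' t) t)
    (h' : ∀ t ∈ interior D, 0 ≤ f' t) : MonotoneOn f D := by
  refine monotoneOn_of_deriv_nonneg hD
    (fun t ht => (hf t ht).continuousAt.continuousWithinAt)
    (fun t ht => ((hf t (interior_subset ht)).differentiableAt).differentiableWithinAt)
    (fun t ht => ?_)
  rw [(hf t (interior_subset ht)).deriv]
  exact h' t ht

private lemma antiOnD {f f' : ℝ → ℝ} {D : Set ℝ} (hD : Convex ℝ D)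
    (hf : ∀ t ∈ D, HasDerivAt f (f' t) t)
    (h' : ∀ t ∈ interior D, f' t ≤ 0) : AntitoneOn f D := by
  refine antitoneOn_of_deriv_nonpos hD
    (fun t ht => (hf t ht).continuousAt.continuousWithinAt)
    (fun t ht => ((hf t (interior_subset ht)).differentiableAt).differentiableWithinAt)
    (fun t ht => ?_)
  rw [(hf t (interior_subset ht)).deriv]
  exact h' t ht

theorem stmt_9 (a : ℝ) (ha : 1 < a) (z x : ℝ → ℝ)
    (hz : ∀ t ≥ (0:ℝ), HasDerivAt z ((a - z t) * x t * z t) t)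
    (hx : ∀ t ≥ (0:ℝ), HasDerivAt x ((a - z t) * x t) t)
    (hz0 : a ≤ z 0) (hx0 : x 0 = Real.log (z 0)) :
    Tendsto z atTop (nhds a) ∧
    Tendsto x atTop (nhds (Real.log a)) ∧
    ∃ C > (0:ℝ), ∀ t ≥ (0:ℝ),
      |x t - Real.log a| ≤ C * Real.exp (-(a * Real.log a) * t) := by
  have ha0 : (0:ℝ) < a := by linarith
  have hla : 0 < Real.log a := Real.log_pos ha
  have cz : ContinuousOn z (Set.Ici 0) :=
    fun t ht => (hz t ht).continuousAt.continuousWithinAt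
  have cx : ContinuousOn x (Set.Ici 0) :=
    fun t ht => (hx t ht).continuousAt.continuousWithinAt
  -- Step 1 : z stays positive
  have hzpos : ∀ t ≥ (0:ℝ), 0 < z t := by
    by_contra hc
    push_neg at hc
    obtain ⟨s, hs0, hzs⟩ := hc
    have hIcc : Set.Icc (0:ℝ) s ⊆ Set.Ici 0 := Set.Icc_subset_Ici_self
    have hcomp : IsCompact (Set.Icc (0:ℝ) s) := isCompact_Icc
    obtain ⟨M, hM⟩ := hcomp.exists_bound_of_continuousOn
      (f := fun t => (a - z t) * x t)
      (((continuousOn_const.sub (cz.mono hIcc)).mul (cx.mono hIcc)))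
    set A : Set ℝ := {t ∈ Set.Icc (0:ℝ) s | z t ≤ 0} with hA
    have hAclosed : IsClosed A := by
      have : A = Set.Icc (0:ℝ) s ∩ z ⁻¹' (Set.Iic 0) := by
        ext t; simp [hA, Set.mem_Iic, and_comm]
      rw [this]
      exact ContinuousOn.preimage_isClosed_of_isClosed (cz.mono hIcc)
        isClosed_Icc isClosed_Iic
    have hAcomp : IsCompact A := hcomp.of_isClosed_subset hAclosed (fun t ht => ht.1)
    have hAne : A.Nonempty := ⟨s, ⟨⟨hs0, le_refl s⟩, hzs⟩⟩
    set T := sInf A with hT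
    have hTA : T ∈ A := hAcomp.sInf_mem hAne
    have hT0 : 0 ≤ T := hTA.1.1
    have hTz : z T ≤ 0 := hTA.2
    have hz00 : 0 < z 0 := by linarith
    have hTne : T ≠ 0 := by
      intro h; rw [h] at hTz; linarith
    have hTpos : 0 < T := lt_of_le_of_ne hT0 (Ne.symm hTne)
    -- z is positive on [0, T)
    have hzposlt : ∀ t ∈ Set.Ico (0:ℝ) T, 0 < z t := by
      intro t ⟨ht0, htT⟩
      by_contra hzt
      push_neg at hzt
      have htA : t ∈ A := ⟨⟨ht0, le_trans htT.le hTA.1.2⟩, hzt⟩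
      have := csInf_le (hAcomp.bddBelow) htA
      rw [← hT] at this
      linarith
    -- consider g t = z t * exp (M * t), monotone on [0, T]
    have hMon : MonotoneOn (fun t => z t * Real.exp (M * t)) (Set.Icc 0 T) := by
      apply monoOnD (convex_Icc 0 T)
        (f' := fun t => ((a - z t) * x t * z t) * Real.exp (M * t)
            + z t * (Real.exp (M * t) * M))
      · intro t ht
        have hexpd : HasDerivAt (fun t => Real.exp (M * t)) (Real.exp (M * t) * M) t := by
          simpa using ((hasDerivAt_id t).const_mul M).exp
        exact (hz t ht.1).mul hexpd
      · intro t ht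
        rw [interior_Icc] at ht
        have htzpos : 0 < z t := hzposlt t ⟨ht.1.le, ht.2⟩
        have hts : t ∈ Set.Icc (0:ℝ) s := ⟨ht.1.le, le_trans ht.2.le hTA.1.2⟩
        have hMb := hM t hts
        rw [Real.norm_eq_abs] at hMb
        have h1 : -M ≤ (a - z t) * x t := by
          have := abs_le.mp hMb
          linarith [this.1]
        have hexp : 0 < Real.exp (M * t) := Real.exp_pos _
        have : 0 ≤ ((a - z t) * x t + M) * z t := by
          apply mul_nonneg _ htzpos.le
          linarith
        nlinarith
    have := hMon ⟨le_refl 0, hTpos.le⟩ ⟨hTpos.le, le_refl T⟩ hTpos.le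
    simp only [mul_zero, Real.exp_zero, mul_one] at this
    nlinarith [Real.exp_pos (M * T)]
  -- Step 2 : x = log z on [0, ∞)
  have hxlog : ∀ t ≥ (0:ℝ), x t = Real.log (z t) := by
    have hd : ∀ t ∈ Set.Ici (0:ℝ), HasDerivAt (fun t => x t - Real.log (z t))
        ((fun _ => (0:ℝ)) t) t := by
      intro t ht
      have h1 : HasDerivAt (fun t => Real.log (z t))
          ((a - z t) * x t * z t / z t) t := (hz t ht).log (ne_of_gt (hzpos t ht))
      have h2 := (hx t ht).sub h1
      have hzne : z t ≠ 0 := ne_of_gt (hzpos t ht)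
      have : (a - z t) * x t - (a - z t) * x t * z t / z t = 0 := by
        field_simp
        ring
      rwa [this] at h2
    have hm := monoOnD (convex_Ici 0) hd (fun t _ => le_refl 0)
    have han := antiOnD (convex_Ici 0) hd (fun t _ => le_refl 0)
    intro t ht
    have h1 := hm (Set.self_mem_Ici) ht ht
    have h2 := han (Set.self_mem_Ici) ht ht
    have : x t - Real.log (z t) = x 0 - Real.log (z 0) := le_antisymm h2 h1
    rw [hx0] at this
    linarith
  have hzexp : ∀ t ≥ (0:ℝ), z t = Real.exp (x t) := by
    intro t ht
    rw [hxlog t ht, Real.exp_log (hzpos t ht)]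
  -- set u = x - log a
  set u : ℝ → ℝ := fun t => x t - Real.log a with hu_def
  have hu : ∀ t ≥ (0:ℝ), HasDerivAt u ((a - z t) * x t) t :=
    fun t ht => (hx t ht).sub_const _
  have hu0 : 0 ≤ u 0 := by
    simp only [hu_def, hx0, sub_nonneg]
    exact Real.log_le_log ha0 hz0
  have cu : ContinuousOn u (Set.Ici 0) := cx.sub continuousOn_const
  -- Step 3 : invariance u ≥ 0
  have huinv : ∀ t ≥ (0:ℝ), 0 ≤ u t := by
    by_contra hc
    push_neg at hc
    obtain ⟨s, hs0, hus⟩ := hc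
    have hIcc : Set.Icc (0:ℝ) s ⊆ Set.Ici 0 := Set.Icc_subset_Ici_self
    set ε : ℝ := min (Real.log a / 2) (-u s) with hε
    have hεpos : 0 < ε := lt_min (by linarith) (by linarith)
    have hεla : ε ≤ Real.log a / 2 := min_le_left _ _
    have hεus : ε ≤ -u s := min_le_right _ _
    set A : Set ℝ := {t ∈ Set.Icc (0:ℝ) s | 0 ≤ u t} with hA
    have hAclosed : IsClosed A := by
      have : A = Set.Icc (0:ℝ) s ∩ u ⁻¹' (Set.Ici 0) := by
        ext t; simp [hA, and_comm]
      rw [this]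
      exact ContinuousOn.preimage_isClosed_of_isClosed (cu.mono hIcc)
        isClosed_Icc isClosed_Ici
    have hAcomp : IsCompact A := isCompact_Icc.of_isClosed_subset hAclosed (fun t ht => ht.1)
    have hAne : A.Nonempty := ⟨0, ⟨⟨le_refl 0, hs0⟩, hu0⟩⟩
    set T := sSup A with hT
    have hTA : T ∈ A := hAcomp.sSup_mem hAne
    have hT0 : 0 ≤ T := hTA.1.1
    have hTu : 0 ≤ u T := hTA.2
    have hTs : T ≤ s := hTA.1.2
    have hTlt : T < s := lt_of_le_of_ne hTs (by intro h; rw [h] at hTu; linarith)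
    set B : Set ℝ := {t ∈ Set.Icc T s | u t ≤ -ε} with hB
    have hBclosed : IsClosed B := by
      have : B = Set.Icc T s ∩ u ⁻¹' (Set.Iic (-ε)) := by
        ext t; simp [hB, and_comm]
      rw [this]
      refine ContinuousOn.preimage_isClosed_of_isClosed
        (cu.mono (fun t ht => le_trans hT0 ht.1)) isClosed_Icc isClosed_Iic
    have hBcomp : IsCompact B := isCompact_Icc.of_isClosed_subset hBclosed (fun t ht => ht.1)
    have hBne : B.Nonempty := ⟨s, ⟨⟨hTs, le_refl s⟩, by linarith⟩⟩
    set T' := sInf B with hT'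
    have hT'B : T' ∈ B := hBcomp.sInf_mem hBne
    have hTT' : T ≤ T' := hT'B.1.1
    have hT's : T' ≤ s := hT'B.1.2
    have hT'u : u T' ≤ -ε := hT'B.2
    have hTltT' : T < T' := lt_of_le_of_ne hTT' (by intro h; rw [← h] at hT'u; linarith)
    -- on (T, T'), -ε < u t < 0
    have hmid : ∀ t ∈ Set.Ioo T T', -ε < u t ∧ u t < 0 := by
      intro t ⟨h1, h2⟩
      constructor
      · by_contra hle
        push_neg at hle
        have : t ∈ B := ⟨⟨h1.le, le_trans h2.le hT's⟩, hle⟩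
        have := csInf_le hBcomp.bddBelow this
        rw [← hT'] at this; linarith
      · by_contra hge
        push_neg at hge
        have : t ∈ A := ⟨⟨le_trans hT0 h1.le, le_trans h2.le hT's⟩, hge⟩
        have := le_csSup hAcomp.bddAbove this
        rw [← hT] at this; linarith
    -- u is monotone on [T, T']
    have hMon : MonotoneOn u (Set.Icc T T') := by
      apply monoOnD (convex_Icc T T') (f' := fun t => (a - z t) * x t)
      · intro t ht
        exact hu t (le_trans hT0 ht.1)
      · intro t ht
        rw [interior_Icc] at ht
        obtain ⟨hl, hr⟩ := hmid t ht
        have ht0 : (0:ℝ) ≤ t := le_trans hT0 ht.1.le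
        have hxt : 0 < x t := by
          have : Real.log a - ε ≤ x t := by
            simp only [hu_def] at hl ⊢
            linarith
          linarith
        have hzx : z t = Real.exp (x t) := hzexp t ht0
        have hexplt : Real.exp (u t) < 1 := by
          rw [← Real.exp_zero]
          exact Real.exp_lt_exp.mpr hr
        have hzlt : z t < a := by
          rw [hzx]
          have : x t = u t + Real.log a := by simp [hu_def]
          rw [this, Real.exp_add, Real.exp_log ha0]
          nlinarith
        exact mul_nonneg (by linarith) hxt.le
    have := hMon ⟨le_refl T, hTltT'.le⟩ ⟨hTltT'.le, le_refl T'⟩ hTltT'.le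
    linarith
  -- Step 4 : exponential decay of u
  set k : ℝ := a * Real.log a with hk
  have hkpos : 0 < k := mul_pos ha0 hla
  have hAnti : AntitoneOn (fun t => u t * Real.exp (k * t)) (Set.Ici 0) := by
    apply antiOnD (convex_Ici 0)
      (f' := fun t => ((a - z t) * x t) * Real.exp (k * t)
          + u t * (Real.exp (k * t) * k))
    · intro t ht
      have hexpd : HasDerivAt (fun t => Real.exp (k * t)) (Real.exp (k * t) * k) t := by
        simpa using ((hasDerivAt_id t).const_mul k).exp
      exact (hu t ht).mul hexpd
    · intro t ht
      rw [interior_Ici] at ht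
      have ht0 : (0:ℝ) ≤ t := ht.le
      have hut : 0 ≤ u t := huinv t ht0
      have hxt : Real.log a ≤ x t := by
        simp only [hu_def] at hut; linarith
      have hzx : z t = Real.exp (x t) := hzexp t ht0
      have hxu : x t = u t + Real.log a := by simp [hu_def]
      have hexp1 : 1 + u t ≤ Real.exp (u t) := by linarith [Real.add_one_le_exp (u t)]
      have key : (a - z t) * x t + k * u t ≤ 0 := by
        rw [hzx, hxu, Real.exp_add, Real.exp_log ha0, hk]
        have h1 : a - a * Real.exp (u t) ≤ -(a * u t) := by nlinarith
        have h2 : (a - a * Real.exp (u t)) * (u t + Real.log a)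
            ≤ -(a * u t) * (u t + Real.log a) := by
          apply mul_le_mul_of_nonneg_right h1
          linarith
        nlinarith [h2, mul_nonneg (mul_nonneg ha0.le hut) hut]
      have hexp : 0 < Real.exp (k * t) := Real.exp_pos _
      nlinarith [mul_le_mul_of_nonneg_right key hexp.le]
    -- end
  have hubound : ∀ t ≥ (0:ℝ), u t ≤ u 0 * Real.exp (-k * t) := by
    intro t ht
    have := hAnti Set.self_mem_Ici ht ht
    simp only [mul_zero, Real.exp_zero, mul_one] at this
    rw [neg_mul, Real.exp_neg, ← div_eq_mul_inv]
    exact (le_div_iff₀ (Real.exp_pos _)).mpr this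
  set C : ℝ := u 0 + 1 with hC
  have hCpos : 0 < C := by linarith
  have habs : ∀ t ≥ (0:ℝ), |x t - Real.log a| ≤ C * Real.exp (-(a * Real.log a) * t) := by
    intro t ht
    have h1 : 0 ≤ u t := huinv t ht
    have h2 := hubound t ht
    rw [abs_of_nonneg h1]
    have : u 0 * Real.exp (-k * t) ≤ C * Real.exp (-k * t) := by
      apply mul_le_mul_of_nonneg_right _ (Real.exp_pos _).le
      linarith
    calc u t ≤ u 0 * Real.exp (-k * t) := h2
      _ ≤ C * Real.exp (-k * t) := this
      _ = C * Real.exp (-(a * Real.log a) * t) := by rw [hk]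
  -- Step 5 : limits
  have hdecay : Tendsto (fun t => C * Real.exp (-k * t)) atTop (nhds 0) := by
    have h1 : Tendsto (fun t : ℝ => k * t) atTop atTop :=
      Tendsto.const_mul_atTop hkpos tendsto_id
    have h2 : Tendsto (fun t : ℝ => Real.exp (-(k * t))) atTop (nhds 0) :=
      Real.tendsto_exp_neg_atTop_nhds_zero.comp h1
    have h3 : Tendsto (fun t : ℝ => C * Real.exp (-(k * t))) atTop (nhds (C * 0)) :=
      h2.const_mul C
    simpa [neg_mul] using h3
  have hxtend : Tendsto x atTop (nhds (Real.log a)) := by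
    apply tendsto_of_tendsto_of_tendsto_of_le_of_le'
      (g := fun _ : ℝ => Real.log a)
      (h := fun t => Real.log a + C * Real.exp (-k * t))
      tendsto_const_nhds
    · have : Tendsto (fun t : ℝ => Real.log a + C * Real.exp (-k * t)) atTop
          (nhds (Real.log a + 0)) := tendsto_const_nhds.add hdecay
      simpa using this
    · filter_upwards [eventually_ge_atTop (0:ℝ)] with t ht
      have := huinv t ht
      simp only [hu_def] at this; linarith
    · filter_upwards [eventually_ge_atTop (0:ℝ)] with t ht
      have h1 := huinv t ht
      have h2 := hubound t ht
      have h3 : u 0 * Real.exp (-k * t) ≤ C * Real.exp (-k * t) := by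
        apply mul_le_mul_of_nonneg_right _ (Real.exp_pos _).le
        linarith
      simp only [hu_def] at h2 h3
      linarith
  have hztend : Tendsto z atTop (nhds a) := by
    have h1 : Tendsto (fun t => Real.exp (x t)) atTop (nhds (Real.exp (Real.log a))) :=
      (Real.continuous_exp.continuousAt).tendsto.comp hxtend
    rw [Real.exp_log ha0] at h1
    apply h1.congr'
    filter_upwards [eventually_ge_atTop (0:ℝ)] with t ht
    exact (hzexp t ht).symm
  exact ⟨hztend, hxtend, C, hCpos, habs⟩
end
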